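/- arXiv:2010.06730 — 4 statements merged into one kernel-verified Lean document; each statement's English description precedes it below -/
import Mathlib

section
/- Let K be a compact convex subset of a locally convex Hausdorff topological vector space and f : K → ℝ an upper semicontinuous convex function. Then f attains its maximum at an extreme point of K. -/
/-!
Since `f` is upper semicontinuous and `K` compact, `f` attains its maximum `m` on `K`, and the
set of maximizers `K ∩ f⁻¹' [m, ∞)` is compact and nonempty. By convexity of `f` it is an extreme
subset of `K`, and by Krein–Milman it has an extreme point, which is then an extreme point of `K`.
-/

open Set

theorem ConvexOn.isExtreme_inter_preimage_Ici {𝕜 E β : Type*} [Semiring 𝕜] [PartialOrder 𝕜]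
    [AddCommMonoid E] [SMul 𝕜 E] [AddCommMonoid β] [LinearOrder β]
    [IsOrderedCancelAddMonoid β] [Module 𝕜 β] [PosSMulStrictMono 𝕜 β] {s : Set E} {f : E → β}
    (hf : ConvexOn 𝕜 s f) {c : β} (hc : ∀ y ∈ s, f y ≤ c) :
    IsExtreme 𝕜 s (s ∩ f ⁻¹' Ici c) :=
  ⟨inter_subset_left, fun _ hx₁ _ hx₂ _ hx hseg =>
    ⟨hx₁, hx.2.trans (hf.le_left_of_right_le hx₁ hx₂ hseg ((hc _ hx₂).trans hx.2))⟩⟩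

theorem stmt8_general {E : Type*} [AddCommGroup E] [Module ℝ E] [TopologicalSpace E]
    [IsTopologicalAddGroup E] [ContinuousSMul ℝ E] [LocallyConvexSpace ℝ E] [T2Space E]
    {K : Set E} (hKcpt : IsCompact K) (hKne : K.Nonempty)
    {f : E → ℝ} (hf : UpperSemicontinuousOn f K) (hfconv : ConvexOn ℝ K f) :
    ∃ x ∈ K.extremePoints ℝ, ∀ y ∈ K, f y ≤ f x := by
  obtain ⟨x₀, hx₀K, hx₀⟩ := hf.exists_isMaxOn hKne hKcpt
  have hext := hfconv.isExtreme_inter_preimage_Ici (isMaxOn_iff.1 hx₀)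
  obtain ⟨x, hx⟩ := (hf.isCompact_inter_preimage_Ici hKcpt (f x₀)).extremePoints_nonempty
    ⟨x₀, hx₀K, mem_preimage.2 self_mem_Ici⟩
  exact ⟨x, hext.extremePoints_subset_extremePoints hx,
    fun y hy => (hx₀ hy).trans (extremePoints_subset hx).2⟩

/-- Bauer Maximum Principle: an upper semicontinuous convex function on a nonempty
compact convex subset of a locally convex Hausdorff topological vector space attains
its maximum at an extreme point. -/
theorem stmt8 {E : Type*} [AddCommGroup E] [Module ℝ E] [TopologicalSpace E]
    [IsTopologicalAddGroup E] [ContinuousSMul ℝ E] [LocallyConvexSpace ℝ E] [T2Space E]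
    {K : Set E} (hKcpt : IsCompact K) (hKconv : Convex ℝ K) (hKne : K.Nonempty)
    {f : E → ℝ} (hf : UpperSemicontinuousOn f K) (hfconv : ConvexOn ℝ K f) :
    ∃ x ∈ K.extremePoints ℝ, ∀ y ∈ K, f y ≤ f x :=
  stmt8_general hKcpt hKne hf hfconv
end

section
/- Let X be a Hausdorff topological space, B a closed subset of X which is a normal topological space, u : [0,∞) → B continuous, and K ⊆ X a compact set that attracts u (for every open neighborhood O of K there is T > 0 with u(t) ∈ O for all t ≥ T). Given a generalized limit LIM, there exists a Borel probability measure μ on X carried by K ∩ B such that LIM_{T→∞} (1/T)∫₀^T φ(u(t)) dt = ∫_X φ dμ for every continuous bounded φ : B → ℝ. Moreover, for a given φ₀ ∈ C_b(B), the generalized limit and μ can be chosen so that ∫ φ₀ dμ = limsup_{T→∞} (1/T)∫₀^T φ₀(u(t)) dt. -/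
/-!
Along the trajectory, `LIM` of the time averages is a positive linear functional on `C_b(B)`
taking the value `1` at `1`. Because `K` attracts `u`, the values along `u` of a function
vanishing on `K ∩ B` tend to `0`, hence so do its time averages: the functional only depends on
the restriction to the compact set `K ∩ B`. By Tietze every continuous function on `K ∩ B` is such
a restriction, so the functional descends to a positive functional on `C(K ∩ B)`, which the
Riesz–Markov–Kakutani theorem represents by a probability measure carried by `K ∩ B`.
For the second part, take for `LIM` the limit along an ultrafilter finer than `atTop` along which
the time averages of `φ₀` converge to their limsup: the limsup is a cluster point.
-/

open MeasureTheory Filter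

/-- A *generalized limit*: a positive linear functional on the space of bounded
real-valued functions on `[0,∞)` extending the classical limit at infinity. -/
structure GeneralizedLimit where
  lim : (ℝ → ℝ) → ℝ
  map_add : ∀ f g : ℝ → ℝ, (∃ M, ∀ t ≥ (0:ℝ), |f t| ≤ M) → (∃ M, ∀ t ≥ (0:ℝ), |g t| ≤ M) →
    lim (f + g) = lim f + lim g
  map_smul : ∀ (c : ℝ) (f : ℝ → ℝ), (∃ M, ∀ t ≥ (0:ℝ), |f t| ≤ M) → lim (c • f) = c * lim f
  extends_limit : ∀ (f : ℝ → ℝ) (l : ℝ), (∃ M, ∀ t ≥ (0:ℝ), |f t| ≤ M) →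
    Tendsto f atTop (nhds l) → lim f = l
  pos : ∀ f : ℝ → ℝ, (∃ M, ∀ t ≥ (0:ℝ), |f t| ≤ M) → (∀ t ≥ (0:ℝ), 0 ≤ f t) → 0 ≤ lim f

open Set Topology BoundedContinuousFunction CompactlySupported

theorem exists_tendsto_ultrafilter_of_bounded {f : ℝ → ℝ} {F : Ultrafilter ℝ}
    (hF : (F : Filter ℝ) ≤ atTop) (hf : ∃ M, ∀ t ≥ (0:ℝ), |f t| ≤ M) :
    ∃ l, Tendsto f (F : Filter ℝ) (𝓝 l) := by
  obtain ⟨M, hM⟩ := hf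
  have hmaps : Ultrafilter.map f F ≤ 𝓟 (Icc (-M) M) :=
    le_principal_iff.mpr <| hF <| (eventually_ge_atTop 0).mono fun t ht => abs_le.mp (hM t ht)
  obtain ⟨l, -, hl⟩ := isCompact_Icc.ultrafilter_le_nhds _ hmaps
  exact ⟨l, hl⟩

namespace GeneralizedLimit

variable (L : GeneralizedLimit) {f g : ℝ → ℝ}

theorem lim_congr (hf : ∃ M, ∀ t ≥ (0:ℝ), |f t| ≤ M) (hg : ∃ M, ∀ t ≥ (0:ℝ), |g t| ≤ M)
    (h : f =ᶠ[atTop] g) : L.lim f = L.lim g := by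
  obtain ⟨Mf, hMf⟩ := hf
  obtain ⟨Mg, hMg⟩ := hg
  have hbdd : ∃ M, ∀ t ≥ (0:ℝ), |(g - f) t| ≤ M :=
    ⟨Mg + Mf, fun t ht => (abs_sub _ _).trans (add_le_add (hMg t ht) (hMf t ht))⟩
  have hzero : L.lim (g - f) = 0 :=
    L.extends_limit _ 0 hbdd <| tendsto_const_nhds.congr' <| by
      filter_upwards [h] with t ht using by simp [ht]
  rw [← add_sub_cancel f g, L.map_add f (g - f) ⟨Mf, hMf⟩ hbdd, hzero, add_zero]

noncomputable def ofUltrafilter (F : Ultrafilter ℝ) (hF : (F : Filter ℝ) ≤ atTop) :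
    GeneralizedLimit where
  lim := limUnder (F : Filter ℝ)
  map_add f g hf hg := by
    obtain ⟨a, ha⟩ := exists_tendsto_ultrafilter_of_bounded hF hf
    obtain ⟨b, hb⟩ := exists_tendsto_ultrafilter_of_bounded hF hg
    rw [ha.limUnder_eq, hb.limUnder_eq]
    exact (ha.add hb).limUnder_eq
  map_smul c f hf := by
    obtain ⟨a, ha⟩ := exists_tendsto_ultrafilter_of_bounded hF hf
    rw [ha.limUnder_eq]
    exact (ha.const_smul c).limUnder_eq
  extends_limit f l _ hl := (hl.mono_left hF).limUnder_eq
  pos f hf hpos := by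
    obtain ⟨a, ha⟩ := exists_tendsto_ultrafilter_of_bounded hF hf
    rw [ha.limUnder_eq]
    exact ge_of_tendsto ha (Eventually.mono (hF (eventually_ge_atTop 0)) hpos)

theorem exists_lim_eq_limsup (hf : ∃ M, ∀ t ≥ (0:ℝ), |f t| ≤ M) :
    ∃ L : GeneralizedLimit, L.lim f = limsup f atTop := by
  obtain ⟨M, hM⟩ := hf
  have hle : IsBoundedUnder (· ≤ ·) atTop f := isBoundedUnder_of_eventually_le
    ((eventually_ge_atTop 0).mono fun t ht => (abs_le.mp (hM t ht)).2)
  have hge : IsBoundedUnder (· ≥ ·) atTop f := isBoundedUnder_of_eventually_ge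
    ((eventually_ge_atTop 0).mono fun t ht => (abs_le.mp (hM t ht)).1)
  obtain ⟨F, hF, hlim⟩ := mapClusterPt_iff_ultrafilter.mp
    (isGreatest_mapClusterPt_limsup hge.isCoboundedUnder_le hle).1
  exact ⟨ofUltrafilter F hF, hlim.limUnder_eq⟩

end GeneralizedLimit

noncomputable def cesaroMean (f : ℝ → ℝ) (T : ℝ) : ℝ := (1 / T) * ∫ t in (0:ℝ)..T, f t

section CesaroMean

variable {f g : ℝ → ℝ}

theorem abs_cesaroMean_le {M : ℝ} (hM : ∀ t ≥ 0, |f t| ≤ M) {T : ℝ} (hT : 0 ≤ T) :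
    |cesaroMean f T| ≤ M := by
  rcases hT.eq_or_lt with rfl | hT
  · simpa [cesaroMean] using (abs_nonneg _).trans (hM 0 le_rfl)
  have hint : |∫ t in (0:ℝ)..T, f t| ≤ M * T := by
    have := intervalIntegral.norm_integral_le_of_norm_le_const (f := f) (C := M)
      fun t ht => (hM t (uIoc_of_le hT.le ▸ ht).1.le)
    rwa [Real.norm_eq_abs, sub_zero, abs_of_pos hT] at this
  rw [cesaroMean, abs_mul, abs_of_pos (one_div_pos.mpr hT), one_div, inv_mul_le_iff₀ hT]
  linarith

theorem cesaroMean_nonneg (hf : ∀ t ≥ 0, 0 ≤ f t) {T : ℝ} (hT : 0 ≤ T) :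
    0 ≤ cesaroMean f T :=
  mul_nonneg (by positivity) (intervalIntegral.integral_nonneg hT fun t ht => hf t ht.1)

theorem cesaroMean_add (hf : ∀ T, IntervalIntegrable f volume 0 T)
    (hg : ∀ T, IntervalIntegrable g volume 0 T) :
    cesaroMean (f + g) = cesaroMean f + cesaroMean g := by
  ext T
  simp only [cesaroMean, Pi.add_apply, intervalIntegral.integral_add (hf T) (hg T), mul_add]

theorem cesaroMean_smul (c : ℝ) : cesaroMean (c • f) = c • cesaroMean f := by
  ext T
  simp only [cesaroMean, Pi.smul_apply, smul_eq_mul, intervalIntegral.integral_const_mul]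
  ring

theorem tendsto_cesaroMean_zero (hf : ∀ T ≥ 0, IntervalIntegrable f volume 0 T)
    (h : Tendsto f atTop (𝓝 0)) : Tendsto (cesaroMean f) atTop (𝓝 0) := by
  rw [Metric.tendsto_nhds]
  intro ε hε
  obtain ⟨T₀, hT₀⟩ := eventually_atTop.mp (Metric.tendsto_nhds.mp h (ε / 2) (half_pos hε))
  set T₁ := max T₀ 0
  have hhead : Tendsto (fun T => (1 / T) * ∫ t in (0:ℝ)..T₁, f t) atTop (𝓝 0) := by
    simpa using tendsto_inv_atTop_zero.mul_const (∫ t in (0:ℝ)..T₁, f t)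
  filter_upwards [Metric.tendsto_nhds.mp hhead (ε / 2) (half_pos hε), eventually_gt_atTop T₁]
    with T hhead hT
  have hT0 : 0 < T := (le_max_right _ _).trans_lt hT
  have htail : |∫ t in T₁..T, f t| ≤ ε / 2 * (T - T₁) := by
    have := intervalIntegral.norm_integral_le_of_norm_le_const (f := f) (C := ε / 2)
      fun t ht => by simpa using (hT₀ t ((le_max_left _ _).trans (uIoc_of_le hT.le ▸ ht).1.le)).le
    rwa [Real.norm_eq_abs, abs_of_pos (sub_pos.mpr hT)] at this
  rw [Real.dist_0_eq_abs] at hhead ⊢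
  rw [cesaroMean, ← intervalIntegral.integral_add_adjacent_intervals (hf T₁ (le_max_right _ _))
    ((hf T₁ (le_max_right _ _)).symm.trans (hf T hT0.le)), mul_add]
  have htail' : |1 / T * ∫ t in T₁..T, f t| ≤ ε / 2 := by
    rw [abs_mul, abs_of_pos (one_div_pos.mpr hT0), one_div, inv_mul_le_iff₀ hT0]
    nlinarith [le_max_right T₀ 0]
  exact (abs_add_le _ _).trans_lt (by linarith)

end CesaroMean

section TimeAverage

variable {Y : Type*} [TopologicalSpace Y] (L : GeneralizedLimit) {γ : ℝ → Y}

theorem BoundedContinuousFunction.abs_cesaroMean_comp_le (g : Y →ᵇ ℝ) {T : ℝ} (hT : 0 ≤ T) :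
    |cesaroMean (g ∘ γ) T| ≤ ‖g‖ :=
  abs_cesaroMean_le (fun t _ => by simpa using g.norm_coe_le_norm (γ t)) hT

noncomputable def timeAverageFunctional (hγ : Continuous γ) : (Y →ᵇ ℝ) →ₗ[ℝ] ℝ where
  toFun g := L.lim (cesaroMean (g ∘ γ))
  map_add' g h := by
    have hint (k : Y →ᵇ ℝ) (T : ℝ) : IntervalIntegrable (k ∘ γ) volume 0 T :=
      (k.continuous.comp hγ).intervalIntegrable 0 T
    rw [BoundedContinuousFunction.coe_add, Pi.add_comp, cesaroMean_add (hint g) (hint h),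
      L.map_add _ _ ⟨_, fun _ => g.abs_cesaroMean_comp_le⟩ ⟨_, fun _ => h.abs_cesaroMean_comp_le⟩]
  map_smul' c g := by
    rw [BoundedContinuousFunction.coe_smul, ← Pi.smul_def, Pi.smul_comp, cesaroMean_smul,
      L.map_smul _ _ ⟨_, fun _ => g.abs_cesaroMean_comp_le⟩, RingHom.id_apply, smul_eq_mul]

variable (hγ : Continuous γ)

theorem timeAverageFunctional_nonneg {g : Y →ᵇ ℝ} (hg : 0 ≤ g) :
    0 ≤ timeAverageFunctional L hγ g :=
  L.pos _ ⟨_, fun _ => g.abs_cesaroMean_comp_le⟩ fun _ => cesaroMean_nonneg fun t _ => hg (γ t)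

theorem timeAverageFunctional_one : timeAverageFunctional L hγ 1 = 1 := by
  refine L.extends_limit _ 1 ⟨_, fun _ => BoundedContinuousFunction.abs_cesaroMean_comp_le 1⟩
    (tendsto_const_nhds.congr' ?_)
  filter_upwards [eventually_gt_atTop 0] with T hT
  simp [cesaroMean, hT.ne']

theorem timeAverageFunctional_eq_zero {K : Set Y} (hK : Tendsto γ atTop (𝓝ˢ K))
    {g : Y →ᵇ ℝ} (hg : ∀ y ∈ K, g y = 0) : timeAverageFunctional L hγ g = 0 :=
  L.extends_limit _ 0 ⟨_, fun _ => g.abs_cesaroMean_comp_le⟩ <|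
    tendsto_cesaroMean_zero (fun T _ => (g.continuous.comp hγ).intervalIntegrable 0 T)
      ((g.continuous.tendsto_nhdsSet_nhds hg).comp hK)

end TimeAverage

section Representation

variable {Y : Type*} [TopologicalSpace Y] (K : Set Y) [CompactSpace K]

noncomputable def BoundedContinuousFunction.restrictCompactₗ : (Y →ᵇ ℝ) →ₗ[ℝ] C_c(K, ℝ) where
  toFun g := ⟨g.toContinuousMap.restrict K, HasCompactSupport.of_compactSpace _⟩
  map_add' _ _ := rfl
  map_smul' _ _ := rfl

variable {K}

theorem BoundedContinuousFunction.restrictCompactₗ_surjective [NormalSpace Y] (hK : IsClosed K) :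
    Function.Surjective (restrictCompactₗ K) := by
  intro ψ
  obtain ⟨g, -, hg⟩ := exists_extension_norm_eq_of_isClosedEmbedding
    (mkOfCompact ψ.toContinuousMap) hK.isClosedEmbedding_subtypeVal
  exact ⟨g, CompactlySupportedContinuousMap.ext fun y => congrFun hg y⟩

theorem exists_positiveLinearMap_restrictCompactₗ_eq [NormalSpace Y] (hK : IsClosed K)
    (ℓ : (Y →ᵇ ℝ) →ₗ[ℝ] ℝ) (hpos : ∀ g, 0 ≤ g → 0 ≤ ℓ g)
    (hvanish : ∀ g : Y →ᵇ ℝ, (∀ y ∈ K, g y = 0) → ℓ g = 0) :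
    ∃ Λ : C_c(K, ℝ) →ₚ[ℝ] ℝ, ∀ g, Λ (restrictCompactₗ K g) = ℓ g := by
  set r := restrictCompactₗ K
  have hr : Function.Surjective r := restrictCompactₗ_surjective hK
  have hker : LinearMap.ker r ≤ LinearMap.ker ℓ := fun g hg =>
    hvanish g fun y hy => DFunLike.congr_fun (LinearMap.mem_ker.mp hg) ⟨y, hy⟩
  let Λ := (LinearMap.ker r).liftQ ℓ hker ∘ₗ (r.quotKerEquivOfSurjective hr).symm.toLinearMap
  have hΛ (g : Y →ᵇ ℝ) : Λ (r g) = ℓ g := by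
    simp [Λ, LinearMap.quotKerEquivOfSurjective_symm_apply]
  refine ⟨PositiveLinearMap.mk₀ Λ fun ψ hψ => ?_, hΛ⟩
  obtain ⟨g, rfl⟩ := hr ψ
  have hsup : r (g ⊔ 0) = r g :=
    CompactlySupportedContinuousMap.ext fun y => max_eq_left (hψ y)
  rw [← hsup, hΛ]
  exact hpos _ le_sup_right

end Representation

theorem exists_isProbabilityMeasure_integral_eq {Y : Type*} [TopologicalSpace Y] [NormalSpace Y]
    [T2Space Y] [MeasurableSpace Y] [BorelSpace Y] {K : Set Y} (hK : IsCompact K)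
    (ℓ : (Y →ᵇ ℝ) →ₗ[ℝ] ℝ) (hpos : ∀ g, 0 ≤ g → 0 ≤ ℓ g) (hone : ℓ 1 = 1)
    (hvanish : ∀ g : Y →ᵇ ℝ, (∀ y ∈ K, g y = 0) → ℓ g = 0) :
    ∃ μ : Measure Y, IsProbabilityMeasure μ ∧ μ Kᶜ = 0 ∧ ∀ g : Y →ᵇ ℝ, ℓ g = ∫ y, g y ∂μ := by
  have := isCompact_iff_compactSpace.mp hK
  obtain ⟨Λ, hΛ⟩ := exists_positiveLinearMap_restrictCompactₗ_eq hK.isClosed ℓ hpos hvanish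
  have hemb : MeasurableEmbedding (Subtype.val : K → Y) :=
    MeasurableEmbedding.subtype_coe hK.isClosed.measurableSet
  set μ := (RealRMK.rieszMeasure Λ).map Subtype.val
  have hint (g : Y →ᵇ ℝ) : ℓ g = ∫ y, g y ∂μ := by
    rw [hemb.integral_map, ← hΛ, ← RealRMK.integral_rieszMeasure]
    rfl
  refine ⟨μ, ⟨?_⟩, ?_, hint⟩
  · have h1 : μ.real univ = 1 := by simpa [hone] using (hint 1).symm
    exact (ENNReal.toReal_eq_one_iff _).mp h1
  · rw [Measure.map_apply hemb.measurable hK.isClosed.measurableSet.compl]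
    simp

theorem IsCompact.nhdsSet_inf_principal_le {X : Type*} [TopologicalSpace X] {K B : Set X}
    (hK : IsCompact K) (hB : IsClosed B) : 𝓝ˢ K ⊓ 𝓟 B ≤ 𝓝ˢ (B ∩ K) := by
  rw [hK.nhdsSet_inf_eq_biSup]
  refine iSup₂_le fun x hx => ?_
  by_cases hxB : x ∈ B
  · exact inf_le_left.trans (nhds_le_nhdsSet ⟨hxB, hx⟩)
  · rw [inf_principal_eq_bot.mpr (hB.isOpen_compl.mem_nhds hxB)]
    exact bot_le

section Trajectory

variable {X : Type*} {B : Set X} {u : ℝ → X} (huB : ∀ t ≥ (0:ℝ), u t ∈ B)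

/-- Extending `u` to negative times by `u 0` gives a curve in `B` that is continuous on all of
`ℝ`, so that time averages along it are exactly linear. -/
def clampedTrajectory (t : ℝ) : B := ⟨u (max t 0), huB _ (le_max_right t 0)⟩

theorem clampedTrajectory_of_nonneg {t : ℝ} (ht : 0 ≤ t) : (clampedTrajectory huB t : X) = u t :=
  congrArg u (max_eq_left ht)

theorem cesaroMean_comp_clampedTrajectory (φ : X → ℝ) :
    cesaroMean (fun t => φ (u t)) =ᶠ[atTop]
      cesaroMean ((B.domRestrict φ) ∘ clampedTrajectory huB) := by
  filter_upwards [eventually_ge_atTop 0] with T hT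
  rw [cesaroMean, cesaroMean, intervalIntegral.integral_congr fun t ht => ?_]
  rw [uIcc_of_le hT] at ht
  exact congrArg φ (clampedTrajectory_of_nonneg huB ht.1).symm

variable [TopologicalSpace X]

theorem continuous_clampedTrajectory (hu : ContinuousOn u (Ici 0)) :
    Continuous (clampedTrajectory huB) :=
  (hu.comp_continuous (continuous_id.max continuous_const) fun t => le_max_right t 0).subtype_mk _

theorem tendsto_clampedTrajectory_nhdsSet {K : Set X} (hK : Tendsto u atTop (𝓝ˢ (B ∩ K))) :
    Tendsto (clampedTrajectory huB) atTop (𝓝ˢ (Subtype.val ⁻¹' K)) := by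
  rw [IsInducing.subtypeVal.nhdsSet_eq_comap, tendsto_comap_iff, Subtype.image_preimage_coe]
  refine hK.congr' ?_
  filter_upwards [eventually_ge_atTop 0] with t ht
  exact (clampedTrajectory_of_nonneg huB ht).symm

end Trajectory

theorem exists_isProbabilityMeasure_lim_cesaroMean_eq_integral {X : Type*} [TopologicalSpace X]
    [T2Space X] [MeasurableSpace X] [BorelSpace X] {B : Set X} (hB : IsClosed B) [NormalSpace B]
    {u : ℝ → X} (hu : ContinuousOn u (Ici 0)) (huB : ∀ t ≥ (0:ℝ), u t ∈ B) {K : Set X}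
    (hK : IsCompact K) (hattr : Tendsto u atTop (𝓝ˢ K)) (L : GeneralizedLimit) :
    ∃ μ : Measure X, IsProbabilityMeasure μ ∧ μ (K ∩ B)ᶜ = 0 ∧
      ∀ φ : X → ℝ, ContinuousOn φ B → (∃ M, ∀ x ∈ B, |φ x| ≤ M) →
        L.lim (cesaroMean fun t => φ (u t)) = ∫ x, φ x ∂μ := by
  have hγ := continuous_clampedTrajectory huB hu
  have hattr' : Tendsto u atTop (𝓝ˢ (B ∩ K)) := by
    refine (tendsto_inf.mpr ⟨hattr, tendsto_principal.mpr ?_⟩).mono_right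
      (hK.nhdsSet_inf_principal_le hB)
    filter_upwards [eventually_ge_atTop 0] using huB
  obtain ⟨ν, hν, hνK, hνℓ⟩ := exists_isProbabilityMeasure_integral_eq
    (hB.isClosedEmbedding_subtypeVal.isCompact_preimage hK) (timeAverageFunctional L hγ)
    (fun _ => timeAverageFunctional_nonneg L hγ) (timeAverageFunctional_one L hγ)
    (fun _ => timeAverageFunctional_eq_zero L hγ (tendsto_clampedTrajectory_nhdsSet huB hattr'))
  have hemb : MeasurableEmbedding (Subtype.val : B → X) := .subtype_coe hB.measurableSet
  refine ⟨ν.map Subtype.val, Measure.isProbabilityMeasure_map hemb.measurable.aemeasurable, ?_,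
    fun φ hφ ⟨M, hM⟩ => ?_⟩
  · rw [Measure.map_apply hemb.measurable (hK.isClosed.inter hB).measurableSet.compl]
    convert hνK using 2
    ext x
    simp
  · let g : B →ᵇ ℝ := ofNormedAddCommGroup (B.domRestrict φ) hφ.domRestrict M fun x => hM x x.2
    calc L.lim (cesaroMean fun t => φ (u t)) = L.lim (cesaroMean (g ∘ clampedTrajectory huB)) :=
          L.lim_congr ⟨M, fun _ => abs_cesaroMean_le fun t ht => hM _ (huB t ht)⟩
            ⟨_, fun _ => g.abs_cesaroMean_comp_le⟩ (cesaroMean_comp_clampedTrajectory huB φ)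
      _ = ∫ x, g x ∂ν := hνℓ g
      _ = ∫ x, φ x ∂(ν.map Subtype.val) := (hemb.integral_map φ).symm

/-- Time-average measures: for a continuous trajectory in a closed normal set `B`
attracted by a compact set `K`, any generalized limit of the time averages is
represented by a Borel probability measure carried by `K ∩ B`; moreover, for a given
`φ₀ ∈ C_b(B)`, the generalized limit and the measure can be chosen so that the mean of
`φ₀` equals the limsup of its time averages. -/
theorem stmt10 {X : Type*} [TopologicalSpace X] [T2Space X] [MeasurableSpace X] [BorelSpace X]
    (B : Set X) (hBclosed : IsClosed B) [NormalSpace B]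
    (u : ℝ → X) (hu : ContinuousOn u (Set.Ici 0)) (huB : ∀ t ≥ (0:ℝ), u t ∈ B)
    (K : Set X) (hK : IsCompact K)
    (hattr : ∀ O : Set X, IsOpen O → K ⊆ O → ∃ T : ℝ, ∀ t ≥ T, u t ∈ O)
    (L : GeneralizedLimit) :
    (∃ μ : Measure X, IsProbabilityMeasure μ ∧ μ ((K ∩ B)ᶜ) = 0 ∧
      ∀ φ : X → ℝ, ContinuousOn φ B → (∃ M, ∀ x ∈ B, |φ x| ≤ M) →
        L.lim (fun T => (1 / T) * ∫ t in (0:ℝ)..T, φ (u t)) = ∫ x, φ x ∂μ) ∧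
    (∀ φ₀ : X → ℝ, ContinuousOn φ₀ B → (∃ M, ∀ x ∈ B, |φ₀ x| ≤ M) →
      ∃ (L' : GeneralizedLimit) (μ : Measure X), IsProbabilityMeasure μ ∧ μ ((K ∩ B)ᶜ) = 0 ∧
        (∀ φ : X → ℝ, ContinuousOn φ B → (∃ M, ∀ x ∈ B, |φ x| ≤ M) →
          L'.lim (fun T => (1 / T) * ∫ t in (0:ℝ)..T, φ (u t)) = ∫ x, φ x ∂μ) ∧
        ∫ x, φ₀ x ∂μ =
          limsup (fun T => (1 / T) * ∫ t in (0:ℝ)..T, φ₀ (u t)) atTop) := by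
  have hattr' : Tendsto u atTop (𝓝ˢ K) := (hasBasis_nhdsSet K).tendsto_right_iff.mpr
    fun O ⟨hO, hKO⟩ => eventually_atTop.mpr (hattr O hO hKO)
  have hrep := exists_isProbabilityMeasure_lim_cesaroMean_eq_integral hBclosed hu huB hK hattr'
  refine ⟨hrep L, fun φ₀ hφ₀ ⟨M, hM⟩ => ?_⟩
  obtain ⟨L', hL'⟩ := GeneralizedLimit.exists_lim_eq_limsup (f := cesaroMean fun t => φ₀ (u t))
    ⟨M, fun _ => abs_cesaroMean_le fun t ht => hM _ (huB t ht)⟩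
  obtain ⟨μ, hμ, hμK, hμL⟩ := hrep L'
  exact ⟨L', μ, hμ, hμK, hμL, (hμL φ₀ hφ₀ ⟨M, hM⟩).symm.trans hL'⟩
end

section
/- Let X be a Hausdorff topological space with continuous inclusion X ⊂ W′ for a Banach space W, let F : X → W′ be a Borel map, and let {S(t)} be a continuous semigroup on X associated with the equation du/dt = F(u). Let E ⊆ X be a Borel set invariant under the semigroup on which F is bounded, and let μ be an invariant Borel probability measure carried by E. Then for every cylindrical test functional Ψ on W′, ∫_X ⟨F(v), Ψ′(v)⟩_{W′,W} dμ(v) = 0; i.e., every invariant measure is a weak stationary statistical solution. -/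
/-!
For the cylindrical functional `Φ = Ψ ∘ ι` the equation and the chain rule give
`d/dt Φ(S t x) = G(S t x)` with `G v = ⟨F v, Ψ'(v)⟩`, hence `Φ(S 1 x) - Φ x = ∫₀¹ G(S t x) dt`
for `x ∈ E`, where `G ∘ S` is bounded because `E` is invariant and `F` is bounded on it.
Integrating over `μ`, the left side vanishes by invariance of `μ`, while Fubini and invariance
turn the right side into `∫₀¹ ∫ G(S t x) dμ dt = ∫ G dμ`.
-/

open MeasureTheory NormedSpace

open Set Function

section Flow

variable {α β E : Type*} [MeasurableSpace α] [MeasurableSpace β] [NormedAddCommGroup E]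
  [NormedSpace ℝ E] {μ : Measure α} {ν : Measure β}

theorem MeasureTheory.MeasurePreserving.integral_comp_of_aestronglyMeasurable {f : α → β}
    (hf : MeasurePreserving f μ ν) {g : β → E} (hg : AEStronglyMeasurable g ν) :
    ∫ x, g (f x) ∂μ = ∫ y, g y ∂ν := by
  rw [← hf.map_eq] at hg ⊢
  exact (integral_map hf.aemeasurable hg).symm

variable [IsFiniteMeasure μ] {S : ℝ → α → α}

theorem integral_intervalIntegral_comp_flow (hS : Measurable (uncurry S))
    (hinv : ∀ t ∈ Ioc (0 : ℝ) 1, MeasurePreserving (S t) μ μ) {G : α → ℝ} (hG : Measurable G)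
    (C : ℝ) (hGbdd : ∀ᵐ x ∂μ, ∀ t ∈ Ioc (0 : ℝ) 1, ‖G (S t x)‖ ≤ C) :
    ∫ x, (∫ t in (0 : ℝ)..1, G (S t x)) ∂μ = ∫ x, G x ∂μ := by
  have hint : Integrable (uncurry fun t x => G (S t x))
      ((volume.restrict (uIoc (0 : ℝ) 1)).prod μ) := by
    rw [uIoc_of_le zero_le_one]
    refine Integrable.of_bound (hG.comp hS).aestronglyMeasurable C ?_
    filter_upwards [Measure.quasiMeasurePreserving_fst.ae (ae_restrict_mem measurableSet_Ioc),
      Measure.quasiMeasurePreserving_snd.ae hGbdd] with p hp hbdd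
    exact hbdd p.1 hp
  rw [← intervalIntegral_integral_swap hint, intervalIntegral.integral_of_le zero_le_one,
    setIntegral_congr_fun measurableSet_Ioc fun t ht =>
      (hinv t ht).integral_comp_of_aestronglyMeasurable hG.aestronglyMeasurable]
  simp

theorem integral_eq_zero_of_hasDerivWithinAt_comp_flow (hS : Measurable (uncurry S))
    (hinv : ∀ t ∈ Icc (0 : ℝ) 1, MeasurePreserving (S t) μ μ) (hS0 : ∀ x, S 0 x = x)
    {Φ G : α → ℝ} (hΦ : Integrable Φ μ) (hG : Measurable G)
    (C : ℝ) (hGbdd : ∀ᵐ x ∂μ, ∀ t ∈ Icc (0 : ℝ) 1, ‖G (S t x)‖ ≤ C)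
    (hcont : ∀ᵐ x ∂μ, ContinuousOn (fun t => Φ (S t x)) (Icc 0 1))
    (hderiv : ∀ᵐ x ∂μ, ∀ t ∈ Ioo (0 : ℝ) 1,
      HasDerivWithinAt (fun t => Φ (S t x)) (G (S t x)) (Ioi t) t) :
    ∫ x, G x ∂μ = 0 := by
  have hFTC : ∀ᵐ x ∂μ, ∫ t in (0 : ℝ)..1, G (S t x) = Φ (S 1 x) - Φ x := by
    filter_upwards [hGbdd, hcont, hderiv] with x hbdd hc hd
    rw [intervalIntegral.integral_eq_sub_of_hasDeriv_right_of_le zero_le_one hc hd, hS0]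
    rw [intervalIntegrable_iff_integrableOn_Icc_of_le zero_le_one]
    refine Measure.integrableOn_of_bounded (M := C) (by simp)
      (hG.comp (hS.comp measurable_prodMk_right)).aestronglyMeasurable ?_
    filter_upwards [ae_restrict_mem measurableSet_Icc] with t ht
    exact hbdd t ht
  have hinv1 := hinv 1 (right_mem_Icc.2 zero_le_one)
  have hΦS : Integrable (fun x => Φ (S 1 x)) μ := hinv1.integrable_comp_of_integrable hΦ
  rw [← integral_intervalIntegral_comp_flow hS (fun t ht => hinv t (Ioc_subset_Icc_self ht)) hG C
      (hGbdd.mono fun x hx t ht => hx t (Ioc_subset_Icc_self ht)), integral_congr_ae hFTC,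
    integral_sub hΦS hΦ,
    hinv1.integral_comp_of_aestronglyMeasurable hΦ.aestronglyMeasurable, sub_self]

end Flow

section Cylindrical

variable {W : Type*} [NormedAddCommGroup W] [NormedSpace ℝ W] {m : ℕ}
  (ψ : (Fin m → ℝ) → ℝ) (w : Fin m → W)

def cylindricalFunctional (u : StrongDual ℝ W) : ℝ :=
  ψ fun i => u (w i)

noncomputable def cylindricalGradient (u : StrongDual ℝ W) : W :=
  ∑ j, fderiv ℝ ψ (fun i => u (w i)) (Pi.single j 1) • w j

theorem apply_cylindricalGradient (L u : StrongDual ℝ W) :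
    L (cylindricalGradient ψ w u) = fderiv ℝ ψ (fun i => u (w i)) fun i => L (w i) := by
  conv_rhs => rw [pi_eq_sum_univ' fun i => L (w i)]
  simp [cylindricalGradient, mul_comm]

variable {ψ}

theorem continuous_cylindricalFunctional (hψ : Continuous ψ) :
    Continuous (cylindricalFunctional ψ w) :=
  hψ.comp <| continuous_pi fun _ => continuous_id.clm_apply continuous_const

theorem norm_cylindricalGradient_le {K : ℝ} (hK : ∀ y, ‖fderiv ℝ ψ y‖ ≤ K) (u : StrongDual ℝ W) :
    ‖cylindricalGradient ψ w u‖ ≤ K * ∑ j, ‖w j‖ := by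
  rw [Finset.mul_sum]
  refine (norm_sum_le _ _).trans (Finset.sum_le_sum fun j _ => ?_)
  rw [norm_smul]
  gcongr
  calc ‖fderiv ℝ ψ _ (Pi.single j 1)‖ ≤ ‖fderiv ℝ ψ _‖ * ‖(Pi.single j 1 : Fin m → ℝ)‖ :=
        (fderiv ℝ ψ _).le_opNorm _
    _ ≤ K := by rw [Pi.norm_single, norm_one, mul_one]; exact hK _

theorem Measurable.apply_cylindricalGradient {X : Type*} [MeasurableSpace X]
    {F ι : X → StrongDual ℝ W} (hF : Measurable F) (hι : Measurable ι) :
    Measurable fun x => F x (cylindricalGradient ψ w (ι x)) := by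
  simp only [_root_.apply_cylindricalGradient]
  exact isBoundedBilinearMap_apply.continuous.measurable2
    ((measurable_fderiv ℝ ψ).comp <|
      measurable_pi_lambda _ fun _ => hι.apply_continuousLinearMap _)
    (measurable_pi_lambda _ fun _ => hF.apply_continuousLinearMap _)

theorem HasDerivWithinAt.cylindricalFunctional {c : ℝ → StrongDual ℝ W} {L : StrongDual ℝ W}
    {s : Set ℝ} {t : ℝ} (hψ : DifferentiableAt ℝ ψ fun i => c t (w i))
    (hc : ∀ j, HasDerivWithinAt (fun τ => c τ (w j)) (L (w j)) s t) :
    HasDerivWithinAt (fun τ => cylindricalFunctional ψ w (c τ)) (L (cylindricalGradient ψ w (c t)))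
      s t := by
  rw [_root_.apply_cylindricalGradient]
  exact hψ.hasFDerivAt.comp_hasDerivWithinAt t (hasDerivWithinAt_pi.2 hc)

end Cylindrical

theorem stmt13_general {W X : Type*} [NormedAddCommGroup W] [NormedSpace ℝ W]
    [TopologicalSpace X] [MeasurableSpace X] [BorelSpace X]
    (ι : X → StrongDual ℝ W) (hι : Continuous ι)
    (F : X → StrongDual ℝ W) (hF : Measurable F)
    (S : ℝ → X → X) (hScont : Continuous fun p : ℝ × X => S p.1 p.2)
    (hS0 : ∀ x, S 0 x = x)
    (hassoc : ∀ (x : X) (w0 : W) (t : ℝ), 0 ≤ t →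
      HasDerivWithinAt (fun s => ι (S s x) w0) (F (S t x) w0) (Set.Ici 0) t)
    (E : Set X) (hEinv : ∀ t ≥ (0:ℝ), ∀ x ∈ E, S t x ∈ E)
    (M : ℝ) (hFbdd : ∀ x ∈ E, ‖F x‖ ≤ M)
    (μ : Measure X) [IsProbabilityMeasure μ] (hcar : μ Eᶜ = 0)
    (hinv : ∀ t ≥ (0:ℝ), ∀ A : Set X, MeasurableSet A → μ (S t ⁻¹' A) = μ A)
    (m : ℕ) (ψ : (Fin m → ℝ) → ℝ) (w : Fin m → W)
    (hψ : ContDiff ℝ 1 ψ) (hsupp : HasCompactSupport ψ) :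
    ∫ x, F x (∑ j, fderiv ℝ ψ (fun i => ι x (w i)) (Pi.single j 1) • w j) ∂μ = 0 := by
  show ∫ x, F x (cylindricalGradient ψ w (ι x)) ∂μ = 0
  obtain ⟨K, hK⟩ := (hsupp.fderiv ℝ).exists_bound_of_continuous (hψ.continuous_fderiv one_ne_zero)
  obtain ⟨Kψ, hKψ⟩ := hsupp.exists_bound_of_continuous hψ.continuous
  have hSt : ∀ t, Continuous (S t) := fun t => hScont.comp (Continuous.prodMk_right t)
  have hΦ : Continuous fun x => cylindricalFunctional ψ w (ι x) :=
    (continuous_cylindricalFunctional w hψ.continuous).comp hι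
  have hpres : ∀ t ∈ Icc (0 : ℝ) 1, MeasurePreserving (S t) μ μ := fun t ht =>
    ⟨(hSt t).measurable, Measure.ext fun A hA => by
      rw [Measure.map_apply (hSt t).measurable hA]; exact hinv t ht.1 A hA⟩
  refine integral_eq_zero_of_hasDerivWithinAt_comp_flow hScont.measurable hpres hS0
    (Integrable.of_bound hΦ.aestronglyMeasurable Kψ (ae_of_all _ fun x => hKψ _))
    (hF.apply_cylindricalGradient w hι.measurable) (M * (K * ∑ j, ‖w j‖)) ?_
    (ae_of_all _ fun x => (hΦ.comp (hScont.comp (Continuous.prodMk_left x))).continuousOn)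
    (ae_of_all _ fun x t ht => ?_)
  · filter_upwards [mem_ae_iff.2 hcar] with x hx t ht
    have hFM := hFbdd _ (hEinv t ht.1 x hx)
    exact (F _).le_opNorm _ |>.trans <| mul_le_mul hFM (norm_cylindricalGradient_le w hK _)
      (norm_nonneg _) ((norm_nonneg _).trans hFM)
  · exact (HasDerivWithinAt.cylindricalFunctional w (hψ.differentiable one_ne_zero _)
      fun j => hassoc x (w j) t ht.1.le).mono (Ioi_subset_Ici ht.1.le)

/-- Every invariant measure of a continuous semigroup associated with the equation
`du/dt = F(u)`, carried by a positively invariant Borel set on which `F` is bounded,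
is a weak stationary statistical solution: `∫ ⟨F(v), Ψ'(v)⟩ dμ = 0` for every
cylindrical test functional `Ψ`. -/
theorem stmt13 {W X : Type*} [NormedAddCommGroup W] [NormedSpace ℝ W] [CompleteSpace W]
    [TopologicalSpace X] [T2Space X] [MeasurableSpace X] [BorelSpace X]
    (ι : X → StrongDual ℝ W) (hι : Continuous ι) (hinj : Function.Injective ι)
    (F : X → StrongDual ℝ W) (hF : Measurable F)
    (S : ℝ → X → X) (hScont : Continuous fun p : ℝ × X => S p.1 p.2)
    (hS0 : ∀ x, S 0 x = x)
    (hSadd : ∀ t ≥ (0:ℝ), ∀ s ≥ (0:ℝ), ∀ x, S (t + s) x = S t (S s x))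
    (hassoc : ∀ (x : X) (w0 : W) (t : ℝ), 0 ≤ t →
      HasDerivWithinAt (fun s => ι (S s x) w0) (F (S t x) w0) (Set.Ici 0) t)
    (E : Set X) (hE : MeasurableSet E) (hEinv : ∀ t ≥ (0:ℝ), ∀ x ∈ E, S t x ∈ E)
    (M : ℝ) (hFbdd : ∀ x ∈ E, ‖F x‖ ≤ M)
    (μ : Measure X) [IsProbabilityMeasure μ] (hcar : μ Eᶜ = 0)
    (hinv : ∀ t ≥ (0:ℝ), ∀ A : Set X, MeasurableSet A → μ (S t ⁻¹' A) = μ A)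
    (m : ℕ) (ψ : (Fin m → ℝ) → ℝ) (w : Fin m → W)
    (hψ : ContDiff ℝ 1 ψ) (hsupp : HasCompactSupport ψ) :
    ∫ x, F x (∑ j, fderiv ℝ ψ (fun i => ι x (w i)) (Pi.single j 1) • w j) ∂μ = 0 :=
  stmt13_general ι hι F hF S hScont hS0 hassoc E hEinv M hFbdd μ hcar hinv m ψ w hψ hsupp
end

section
/- (Sion's minimax theorem, affine case) Let U be a compact convex subset of a topological vector space and Z a convex subset of a topological vector space. Let f : U × Z → ℝ be jointly continuous, linear (or affine) in the first variable for each fixed second variable, and affine in the second variable for each fixed first variable. Then max_{u∈U} inf_{v∈Z} f(u,v) = inf_{v∈Z} max_{u∈U} f(u,v). -/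
/-!
For a real level `c` below `inf_v sup_u f(u,v)`, every `v` has some `u` with `c ≤ f(u,v)`.
For finitely many points `v₁, …, vₙ` one `u` serves them all: otherwise the compact convex
set `{(f(u,vᵢ))ᵢ | u ∈ U}` misses the orthant `{x | ∀ i, c ≤ xᵢ}`, and a separating functional,
necessarily with nonnegative coefficients, gives weights `wᵢ` with `∑ wᵢ f(u,vᵢ) < c` for all `u`;
by convexity in `v` the point `∑ wᵢ vᵢ` then has no such `u`. Compactness of `U` passes from
finite families to all of `Z`, and the upper semicontinuous function `u ↦ inf_v f(u,v)` attains
its maximum on `U`.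
-/

open Set

section

variable {E G : Type*} [AddCommGroup E] [Module ℝ E] [AddCommGroup G] [Module ℝ G]

def AffineOn (s : Set E) (g : E → ℝ) : Prop :=
  ∀ x ∈ s, ∀ y ∈ s, ∀ θ : ℝ, 0 ≤ θ → θ ≤ 1 → g (θ • x + (1 - θ) • y) = θ * g x + (1 - θ) * g y

theorem AffineOn.convexOn {s : Set E} {g : E → ℝ} (hg : AffineOn s g) (hs : Convex ℝ s) :
    ConvexOn ℝ s g := by
  refine ⟨hs, fun x hx y hy a b ha hb hab => ?_⟩
  obtain rfl : b = 1 - a := by linarith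
  exact (hg x hx y hy a ha (by linarith)).le

theorem Convex.image_of_affineOn {ι : Type*} {s : Set E} (hs : Convex ℝ s) {T : E → ι → ℝ}
    (hT : ∀ i, AffineOn s fun x => T x i) : Convex ℝ (T '' s) := by
  rintro _ ⟨x, hx, rfl⟩ _ ⟨y, hy, rfl⟩ a b ha hb hab
  refine ⟨a • x + b • y, hs hx hy ha hb hab, funext fun i => ?_⟩
  obtain rfl : b = 1 - a := by linarith
  exact hT i x hx y hy a ha (by linarith)

theorem map_nonneg_of_forall_lt_map_add_smul {V F : Type*} [AddCommGroup V] [Module ℝ V]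
    [FunLike F V ℝ] [LinearMapClass F ℝ V ℝ] (φ : F) {x y : V} {b : ℝ}
    (h : ∀ t : ℝ, 0 ≤ t → b < φ (x + t • y)) : 0 ≤ φ y := by
  have h₀ : b < φ x := by simpa using h 0 le_rfl
  by_contra! hneg
  have := h ((φ x - b) / -φ y) (div_nonneg (by linarith) (by linarith))
  rw [map_add, map_smul, smul_eq_mul, div_mul_eq_mul_div, div_neg, mul_div_assoc,
    div_self hneg.ne, mul_one] at this
  linarith

theorem exists_mem_stdSimplex_sum_mul_lt {ι : Type*} [Fintype ι] {S : Set (ι → ℝ)}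
    (hScpt : IsCompact S) (hSconv : Convex ℝ S) (hSne : S.Nonempty) {c : ℝ}
    (hS : ∀ x ∈ S, ∃ i, x i < c) :
    ∃ w ∈ stdSimplex ℝ ι, ∀ x ∈ S, ∑ i, w i * x i < c := by
  classical
  set Q : Set (ι → ℝ) := univ.pi fun _ => Ici c
  have hdisj : Disjoint S Q := disjoint_left.2 fun x hx hxQ =>
    let ⟨i, hi⟩ := hS x hx
    hi.not_ge (mem_univ_pi.1 hxQ i)
  obtain ⟨φ, a, b, hφS, hab, hφQ⟩ := geometric_hahn_banach_compact_closed hSconv hScpt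
    (convex_pi fun _ _ => convex_Ici c) (isClosed_set_pi fun _ _ => isClosed_Ici) hdisj
  set e : ι → ι → ℝ := fun i j => if i = j then 1 else 0
  have hφ : ∀ x, φ x = ∑ i, x i * φ (e i) := fun x => by
    simpa using φ.toLinearMap.pi_apply_eq_sum_univ x
  have hconst : φ (fun _ => c) = c * ∑ i, φ (e i) := by rw [hφ, Finset.mul_sum]
  have hcQ : b < φ (fun _ => c) := hφQ _ (mem_univ_pi.2 fun _ => le_refl c)
  have hcoef : ∀ i, 0 ≤ φ (e i) := fun i =>
    map_nonneg_of_forall_lt_map_add_smul φ fun t ht =>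
      hφQ ((fun _ => c) + t • e i) <| mem_univ_pi.2 fun j => by
        have : 0 ≤ t * e i j := mul_nonneg ht (by simp only [e]; split_ifs <;> norm_num)
        simpa using this
  obtain ⟨x₀, hx₀⟩ := hSne
  have htot : 0 < ∑ i, φ (e i) := by
    refine (Finset.sum_nonneg fun i _ => hcoef i).lt_of_ne fun h => ?_
    have hzero := (Finset.sum_eq_zero_iff_of_nonneg fun i _ => hcoef i).1 h.symm
    have h₁ := hφS x₀ hx₀
    rw [hφ] at h₁ hcQ
    simp only [hzero, Finset.mem_univ, mul_zero, Finset.sum_const_zero] at h₁ hcQ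
    linarith
  refine ⟨fun i => φ (e i) / ∑ j, φ (e j),
    ⟨fun i => div_nonneg (hcoef i) htot.le, by rw [← Finset.sum_div, div_self htot.ne']⟩,
    fun x hx => ?_⟩
  have hx' : φ x < c * ∑ i, φ (e i) := by linarith [hφS x hx]
  calc ∑ i, φ (e i) / (∑ j, φ (e j)) * x i = φ x / ∑ i, φ (e i) := by
        rw [hφ, Finset.sum_div]
        exact Finset.sum_congr rfl fun i _ => by ring
    _ < c := (div_lt_iff₀ htot).2 hx'

section Minimax

variable [TopologicalSpace E] {U : Set E} {Z : Set G} {f : E → G → ℝ}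

theorem exists_forall_le_of_forall_exists_le_of_finite (hUcpt : IsCompact U) (hUconv : Convex ℝ U)
    (hUne : U.Nonempty) (hZconv : Convex ℝ Z) (hcont : ∀ z ∈ Z, ContinuousOn (f · z) U)
    (haff : ∀ z ∈ Z, AffineOn U (f · z)) (hconv : ∀ u ∈ U, ConvexOn ℝ Z (f u))
    {c : ℝ} (hc : ∀ z ∈ Z, ∃ u ∈ U, c ≤ f u z) {ι : Type*} [Fintype ι] (v : ι → G)
    (hv : ∀ i, v i ∈ Z) : ∃ u ∈ U, ∀ i, c ≤ f u (v i) := by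
  by_contra! hcon
  set T : E → ι → ℝ := fun u i => f u (v i)
  obtain ⟨w, ⟨hw₀, hw₁⟩, hw⟩ := exists_mem_stdSimplex_sum_mul_lt (S := T '' U)
    (hUcpt.image_of_continuousOn (continuousOn_pi.2 fun i => hcont _ (hv i)))
    (hUconv.image_of_affineOn fun i => haff _ (hv i)) (hUne.image T)
    (by rintro _ ⟨u, hu, rfl⟩; exact hcon u hu)
  obtain ⟨u, hu, hcu⟩ := hc _ (hZconv.sum_mem (fun i _ => hw₀ i) hw₁ fun i _ => hv i)
  have := (hconv u hu).map_sum_le (fun i _ => hw₀ i) hw₁ fun i _ => hv i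
  simp only [smul_eq_mul] at this
  linarith [hw _ ⟨u, hu, rfl⟩]

theorem exists_forall_le_of_forall_exists_le (hUcpt : IsCompact U) (hUconv : Convex ℝ U)
    (hUne : U.Nonempty) (hZconv : Convex ℝ Z) (hcont : ∀ z ∈ Z, ContinuousOn (f · z) U)
    (haff : ∀ z ∈ Z, AffineOn U (f · z)) (hconv : ∀ u ∈ U, ConvexOn ℝ Z (f u))
    {c : ℝ} (hc : ∀ z ∈ Z, ∃ u ∈ U, c ≤ f u z) : ∃ u ∈ U, ∀ z ∈ Z, c ≤ f u z := by
  have : CompactSpace U := isCompact_iff_compactSpace.mp hUcpt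
  set C : Z → Set U := fun z => {x | c ≤ f x z}
  have hC : ∀ z, IsClosed (C z) := fun z => isClosed_le continuous_const
    ((hcont z z.2).comp_continuous continuous_subtype_val Subtype.prop)
  have hfin : ∀ s : Finset Z, (univ ∩ ⋂ z ∈ s, C z).Nonempty := fun s => by
    obtain ⟨u, hu, hall⟩ := exists_forall_le_of_forall_exists_le_of_finite hUcpt hUconv hUne
      hZconv hcont haff hconv hc (fun z : s => z.1.1) fun z => z.1.2
    exact ⟨⟨u, hu⟩, mem_univ _, mem_iInter₂.2 fun z hz => hall ⟨z, hz⟩⟩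
  obtain ⟨x, -, hx⟩ := isCompact_univ.inter_iInter_nonempty C hC hfin
  exact ⟨x, x.2, fun z hz => mem_iInter.1 hx ⟨z, hz⟩⟩

theorem minimax_of_affineOn_convexOn (hUcpt : IsCompact U) (hUconv : Convex ℝ U)
    (hUne : U.Nonempty) (hZconv : Convex ℝ Z) (hcont : ∀ z ∈ Z, ContinuousOn (f · z) U)
    (haff : ∀ z ∈ Z, AffineOn U (f · z)) (hconv : ∀ u ∈ U, ConvexOn ℝ Z (f u)) :
    (∃ u₀ ∈ U, (⨅ v : Z, (f u₀ v : EReal)) = ⨆ u : U, ⨅ v : Z, (f u v : EReal)) ∧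
    (⨆ u : U, ⨅ v : Z, (f u v : EReal)) = ⨅ v : Z, ⨆ u : U, (f u v : EReal) := by
  set g : E → EReal := fun u => ⨅ v : Z, (f u v : EReal)
  have hg : UpperSemicontinuousOn g U := upperSemicontinuousOn_iInf fun v =>
    (continuous_coe_real_ereal.comp_continuousOn (hcont v v.2)).upperSemicontinuousOn
  obtain ⟨u₀, hu₀, hmax⟩ := hg.exists_isMaxOn hUne hUcpt
  have hsup : ⨆ u : U, g u = g u₀ :=
    le_antisymm (iSup_le fun u => hmax u.2) (le_iSup (fun u : U => g u) ⟨u₀, hu₀⟩)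
  have hle : (⨅ v : Z, ⨆ u : U, (f u v : EReal)) ≤ g u₀ := by
    refine EReal.ge_of_forall_gt_iff_ge.1 fun c hc => ?_
    have hc' : ∀ z ∈ Z, ∃ u ∈ U, c ≤ f u z := fun z hz => by
      obtain ⟨u, hu⟩ := lt_iSup_iff.1 (hc.trans_le (iInf_le _ ⟨z, hz⟩))
      exact ⟨u, u.2, (EReal.coe_lt_coe_iff.1 hu).le⟩
    obtain ⟨u, hu, hall⟩ := exists_forall_le_of_forall_exists_le hUcpt hUconv hUne hZconv hcont
      haff hconv hc'
    exact (le_iInf fun z : Z => EReal.coe_le_coe_iff.2 (hall z z.2)).trans (hmax hu)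
  exact ⟨⟨u₀, hu₀, hsup.symm⟩, le_antisymm (iSup_iInf_le_iInf_iSup _) (hsup ▸ hle)⟩

end Minimax

end

theorem stmt14_general {E G : Type*}
    [AddCommGroup E] [Module ℝ E] [TopologicalSpace E]
    [AddCommGroup G] [Module ℝ G] [TopologicalSpace G]
    (U : Set E) (hUcpt : IsCompact U) (hUconv : Convex ℝ U) (hUne : U.Nonempty)
    (Z : Set G) (hZconv : Convex ℝ Z)
    (f : E → G → ℝ)
    (hcont : ContinuousOn (fun p : E × G => f p.1 p.2) (U ×ˢ Z))
    (haff₁ : ∀ v ∈ Z, ∀ u₁ ∈ U, ∀ u₂ ∈ U, ∀ θ : ℝ, 0 ≤ θ → θ ≤ 1 →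
      f (θ • u₁ + (1 - θ) • u₂) v = θ * f u₁ v + (1 - θ) * f u₂ v)
    (haff₂ : ∀ u ∈ U, ∀ v₁ ∈ Z, ∀ v₂ ∈ Z, ∀ θ : ℝ, 0 ≤ θ → θ ≤ 1 →
      f u (θ • v₁ + (1 - θ) • v₂) = θ * f u v₁ + (1 - θ) * f u v₂) :
    (∃ u₀ ∈ U, (⨅ v : Z, (f u₀ v : EReal)) = ⨆ u : U, ⨅ v : Z, (f u v : EReal)) ∧
    (⨆ u : U, ⨅ v : Z, (f u v : EReal)) = ⨅ v : Z, ⨆ u : U, (f u v : EReal) := by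
  have hcont₁ : ∀ z ∈ Z, ContinuousOn (f · z) U := fun z hz =>
    hcont.comp (continuous_id.prodMk continuous_const).continuousOn fun _ hu => ⟨hu, hz⟩
  exact minimax_of_affineOn_convexOn hUcpt hUconv hUne hZconv hcont₁ haff₁
    fun u hu => AffineOn.convexOn (haff₂ u hu) hZconv

/-- Sion's minimax theorem (affine case): for a compact convex `U` in a topological
vector space, a convex `Z` in a (possibly different) topological vector space, and a
jointly continuous `f` which is affine in each variable separately,
`max_{u∈U} inf_{v∈Z} f(u,v) = inf_{v∈Z} max_{u∈U} f(u,v)` (and the outer max on the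
left-hand side is attained). -/
theorem stmt14 {E G : Type*}
    [AddCommGroup E] [Module ℝ E] [TopologicalSpace E]
    [AddCommGroup G] [Module ℝ G] [TopologicalSpace G]
    (U : Set E) (hUcpt : IsCompact U) (hUconv : Convex ℝ U) (hUne : U.Nonempty)
    (Z : Set G) (hZconv : Convex ℝ Z) (hZne : Z.Nonempty)
    (f : E → G → ℝ)
    (hcont : ContinuousOn (fun p : E × G => f p.1 p.2) (U ×ˢ Z))
    (haff₁ : ∀ v ∈ Z, ∀ u₁ ∈ U, ∀ u₂ ∈ U, ∀ θ : ℝ, 0 ≤ θ → θ ≤ 1 →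
      f (θ • u₁ + (1 - θ) • u₂) v = θ * f u₁ v + (1 - θ) * f u₂ v)
    (haff₂ : ∀ u ∈ U, ∀ v₁ ∈ Z, ∀ v₂ ∈ Z, ∀ θ : ℝ, 0 ≤ θ → θ ≤ 1 →
      f u (θ • v₁ + (1 - θ) • v₂) = θ * f u v₁ + (1 - θ) * f u v₂) :
    (∃ u₀ ∈ U, (⨅ v : Z, (f u₀ v : EReal)) = ⨆ u : U, ⨅ v : Z, (f u v : EReal)) ∧
    (⨆ u : U, ⨅ v : Z, (f u v : EReal)) = ⨅ v : Z, ⨆ u : U, (f u v : EReal) :=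
  stmt14_general U hUcpt hUconv hUne Z hZconv f hcont haff₁ haff₂
end
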